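/- Let Θ = {0, 1/L, ..., (L−1)/L} with distance D(θ,θ') = min(|θ−θ'|, 1−|θ−θ'|), let w ∈ Δ(Θ) have full support, and fix v, γ > 0, σ ∈ (0,1), β = (1−σ)/σ. Define the trade objective over ψ : Θ² → [0,1]: F(ψ) = Σ_{θ,θ'∈Θ} w_θ w_{θ'} [ β( (v/2) ψ_{θθ'} ψ_{θ'θ} − γ ψ_{θθ'} D(θ,θ') ) + H(ψ_{θθ'}) ]. Suppose F has a unique maximizer ψ*. Then ψ* is symmetric (ψ*_{θθ'} = ψ*_{θ'θ}), and for each pair (θ,θ'), ψ*_{θθ'} is a stationary point of the function ρ ↦ β(−γ D(θ,θ') ρ + (v/2) ρ²) + H(ρ) on (0,1), i.e. it satisfies β(v ψ*_{θθ'} − γ D(θ,θ')) + H'(ψ*_{θθ'}) = 0, which is the first-order condition of the motif problem max_{ρ∈[0,1]} [β(a₁ρ + (a₂/2)ρ²) + H(ρ)] with a₁ = −γD(θ,θ') and a₂ = v. -/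

import Mathlib

/-- The circular distance between locations `θ/L` and `θ'/L` on the circle of unit
circumference: `D(θ,θ') = min(|θ−θ'|, 1−|θ−θ'|)`. -/
noncomputable def circleDist {L : ℕ} (θ θ' : Fin L) : ℝ :=
  min |(θ : ℝ) / L - (θ' : ℝ) / L| (1 - |(θ : ℝ) / L - (θ' : ℝ) / L|)

/-- The Bernoulli entropy `H(p) = −p log p − (1−p) log(1−p)`, extended by `0` at the
endpoints. -/
noncomputable def bernoulliEntropy (p : ℝ) : ℝ :=
  Real.negMulLog p + Real.negMulLog (1 - p)

/-- The trade objective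
`F(ψ) = ∑_{θ,θ'} w_θ w_{θ'} [β((v/2)ψ_{θθ'}ψ_{θ'θ} − γ ψ_{θθ'}D(θ,θ')) + H(ψ_{θθ'})]`. -/
noncomputable def tradeObjective {L : ℕ} (w : Fin L → ℝ) (v γ β : ℝ)
    (ψ : Fin L → Fin L → ℝ) : ℝ :=
  ∑ θ : Fin L, ∑ θ' : Fin L, w θ * w θ' *
    (β * (v / 2 * ψ θ θ' * ψ θ' θ - γ * ψ θ θ' * circleDist θ θ') +
      bernoulliEntropy (ψ θ θ'))

/-!
Transposing a kernel leaves `F` unchanged because `D` is symmetric, so uniqueness of the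
maximizer forces `ψ*` to be symmetric. Setting both `ψ θ θ'` and `ψ θ' θ` to a common value `x`
changes `F` by a positive multiple of the motif objective
`m(x) = β(−γ D(θ,θ') x + (v/2) x²) + H(x)`, hence `ψ*_{θθ'}` maximizes `m` on `[0,1]`.
Near `0` the entropy grows like `x log (1/x)`, faster than any linear term, so the maximum of
`m` is not at `0`, and by the symmetry `H(1 − x) = H(x)` it is not at `1` either; at an interior
maximum `m'` vanishes.
-/

open Real Set Finset

lemma bernoulliEntropy_eq_binEntropy : bernoulliEntropy = binEntropy :=
  funext fun p => (binEntropy_eq_negMulLog_add_negMulLog_one_sub p).symm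

noncomputable def motifObjective (β a₁ a₂ ρ : ℝ) : ℝ :=
  β * (a₁ * ρ + a₂ / 2 * ρ ^ 2) + bernoulliEntropy ρ

section Motif

variable {β a₁ a₂ ρ : ℝ}

lemma motifObjective_one_sub :
    motifObjective β a₁ a₂ (1 - ρ) = motifObjective β (-(a₁ + a₂)) a₂ ρ + β * (a₁ + a₂ / 2) := by
  simp only [motifObjective, bernoulliEntropy_eq_binEntropy, binEntropy_one_sub]
  ring

lemma exists_motifObjective_zero_lt (β a₁ a₂ : ℝ) :
    ∃ t ∈ Icc (0 : ℝ) 1, motifObjective β a₁ a₂ 0 < motifObjective β a₁ a₂ t := by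
  set M := |β * a₁| + |β * a₂|
  -- `M` bounds the slope of the quadratic part on `[0,1]`, while `H t ≥ t log (1/t) = t (M + 1)`
  set t := exp (-(M + 1))
  have ht₀ : 0 < t := exp_pos _
  have ht₁ : t ≤ 1 := exp_le_one_iff.2 (by linarith [show 0 ≤ M by positivity])
  have hquad : -(M * t) ≤ β * (a₁ * t + a₂ / 2 * t ^ 2) := by
    nlinarith [neg_abs_le (β * a₁), neg_abs_le (β * a₂), abs_nonneg (β * a₂),
      mul_le_mul_of_nonneg_left ht₁ ht₀.le]
  have hentropy : t * (M + 1) ≤ bernoulliEntropy t := by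
    rw [bernoulliEntropy, negMulLog, log_exp]
    linarith [negMulLog_nonneg (sub_nonneg.2 ht₁) (sub_le_self 1 ht₀.le)]
  refine ⟨t, ⟨ht₀.le, ht₁⟩, ?_⟩
  simp only [motifObjective, bernoulliEntropy_eq_binEntropy, binEntropy_zero] at hentropy ⊢
  nlinarith

lemma IsMaxOn.motifObjective_ne_zero (h : IsMaxOn (motifObjective β a₁ a₂) (Icc 0 1) ρ) :
    ρ ≠ 0 := by
  rintro rfl
  obtain ⟨t, ht, hlt⟩ := exists_motifObjective_zero_lt β a₁ a₂
  exact (h ht).not_gt hlt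

lemma IsMaxOn.motifObjective_ne_one (h : IsMaxOn (motifObjective β a₁ a₂) (Icc 0 1) ρ) :
    ρ ≠ 1 := by
  rintro rfl
  have hreflect : ∀ t, motifObjective β (-(a₁ + a₂)) a₂ t =
      motifObjective β a₁ a₂ (1 - t) - β * (a₁ + a₂ / 2) := fun t => by
    rw [motifObjective_one_sub]; ring
  have hmax₀ : IsMaxOn (motifObjective β (-(a₁ + a₂)) a₂) (Icc 0 1) 0 := fun t ht => by
    change motifObjective β (-(a₁ + a₂)) a₂ t ≤ motifObjective β (-(a₁ + a₂)) a₂ 0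
    rw [hreflect, hreflect, sub_zero]
    exact sub_le_sub_right (h ⟨sub_nonneg.2 ht.2, sub_le_self 1 ht.1⟩) _
  exact hmax₀.motifObjective_ne_zero rfl

lemma hasDerivAt_motifObjective (hρ : ρ ∈ Ioo (0 : ℝ) 1) :
    HasDerivAt (motifObjective β a₁ a₂) (β * (a₁ + a₂ * ρ) + log ((1 - ρ) / ρ)) ρ := by
  have hentropy := hasDerivAt_binEntropy hρ.1.ne' hρ.2.ne
  rw [← log_div (sub_ne_zero.2 hρ.2.ne') hρ.1.ne', ← bernoulliEntropy_eq_binEntropy] at hentropy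
  have hquad : HasDerivAt (fun x => β * (a₁ * x + a₂ / 2 * x ^ 2)) (β * (a₁ + a₂ * ρ)) ρ :=
    ((((hasDerivAt_id' ρ).const_mul a₁).add ((hasDerivAt_pow 2 ρ).const_mul (a₂ / 2))).const_mul
      β).congr_deriv (by push_cast; ring)
  exact hquad.add hentropy

lemma IsMaxOn.motifObjective_mem_Ioo (h : IsMaxOn (motifObjective β a₁ a₂) (Icc 0 1) ρ)
    (hρ : ρ ∈ Icc (0 : ℝ) 1) : ρ ∈ Ioo (0 : ℝ) 1 :=
  ⟨hρ.1.lt_of_ne h.motifObjective_ne_zero.symm, hρ.2.lt_of_ne h.motifObjective_ne_one⟩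

lemma IsMaxOn.motifObjective_deriv_eq_zero (h : IsMaxOn (motifObjective β a₁ a₂) (Icc 0 1) ρ)
    (hρ : ρ ∈ Icc (0 : ℝ) 1) : β * (a₁ + a₂ * ρ) + log ((1 - ρ) / ρ) = 0 :=
  have hρ' := h.motifObjective_mem_Ioo hρ
  (h.isLocalMax (Icc_mem_nhds hρ'.1 hρ'.2)).hasDerivAt_eq_zero (hasDerivAt_motifObjective hρ')

end Motif

lemma circleDist_comm {L : ℕ} (θ θ' : Fin L) : circleDist θ θ' = circleDist θ' θ := by
  simp only [circleDist, abs_sub_comm]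

lemma tradeObjective_swap {L : ℕ} (w : Fin L → ℝ) (v γ β : ℝ) (ψ : Fin L → Fin L → ℝ) :
    tradeObjective w v γ β (Function.swap ψ) = tradeObjective w v γ β ψ := by
  unfold tradeObjective
  rw [sum_comm]
  refine sum_congr rfl fun θ _ => sum_congr rfl fun θ' _ => ?_
  simp only [Function.swap, circleDist_comm θ' θ]
  ring

def symmUpdate {ι : Type*} [DecidableEq ι] (ψ : ι → ι → ℝ) (θ θ' : ι) (x : ℝ) : ι → ι → ℝ :=
  fun a b => if s(a, b) = s(θ, θ') then x else ψ a b

lemma symmUpdate_self {ι : Type*} [DecidableEq ι] {ψ : ι → ι → ℝ} {θ θ' : ι}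
    (h : ψ θ' θ = ψ θ θ') : symmUpdate ψ θ θ' (ψ θ θ') = ψ := by
  ext a b
  unfold symmUpdate
  split_ifs with hab
  · rcases Sym2.eq_iff.1 hab with ⟨rfl, rfl⟩ | ⟨rfl, rfl⟩
    exacts [rfl, h.symm]
  · rfl

lemma symmUpdate_mem {ι : Type*} [DecidableEq ι] {ψ : ι → ι → ℝ} {s : Set ℝ}
    (hψ : ∀ a b, ψ a b ∈ s) (θ θ' : ι) {x : ℝ} (hx : x ∈ s) (a b : ι) :
    symmUpdate ψ θ θ' x a b ∈ s := by
  unfold symmUpdate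
  split_ifs
  exacts [hx, hψ a b]

lemma tradeObjective_symmUpdate_sub {L : ℕ} (w : Fin L → ℝ) (v γ β : ℝ)
    (ψ : Fin L → Fin L → ℝ) (θ θ' : Fin L) (x y : ℝ) :
    tradeObjective w v γ β (symmUpdate ψ θ θ' x) - tradeObjective w v γ β (symmUpdate ψ θ θ' y) =
      #{p : Fin L × Fin L | s(p.1, p.2) = s(θ, θ')} * (w θ * w θ') *
        (motifObjective β (-(γ * circleDist θ θ')) v x -
          motifObjective β (-(γ * circleDist θ θ')) v y) := by
  set m := motifObjective β (-(γ * circleDist θ θ')) v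
  set T : ℝ → Fin L × Fin L → ℝ := fun z p =>
    w p.1 * w p.2 * (β * (v / 2 * symmUpdate ψ θ θ' z p.1 p.2 * symmUpdate ψ θ θ' z p.2 p.1 -
      γ * symmUpdate ψ θ θ' z p.1 p.2 * circleDist p.1 p.2) +
        bernoulliEntropy (symmUpdate ψ θ θ' z p.1 p.2))
  have hF : ∀ z, tradeObjective w v γ β (symmUpdate ψ θ θ' z) = ∑ p, T z p :=
    fun z => (Fintype.sum_prod_type' _).symm
  have hdiff : ∀ p : Fin L × Fin L,
      T x p - T y p = if s(p.1, p.2) = s(θ, θ') then w θ * w θ' * (m x - m y) else 0 := by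
    rintro ⟨a, b⟩
    have hba : s(b, a) = s(θ, θ') ↔ s(a, b) = s(θ, θ') := by rw [Sym2.eq_swap]
    split_ifs with hab
    · simp only [T, symmUpdate, if_pos hab, if_pos (hba.2 hab), m, motifObjective]
      rcases Sym2.eq_iff.1 hab with ⟨rfl, rfl⟩ | ⟨rfl, rfl⟩
      · ring
      · rw [circleDist_comm]; ring
    · simp only [T, symmUpdate, if_neg hab, if_neg (mt hba.1 hab), sub_self]
  rw [hF, hF, ← sum_sub_distrib, sum_congr rfl fun p _ => hdiff p, sum_ite, sum_const_zero,
    add_zero, sum_const, nsmul_eq_mul]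
  ring

lemma tradeObjective_symmUpdate_le_iff {L : ℕ} {w : Fin L → ℝ} (hw : ∀ θ, 0 < w θ) (v γ β : ℝ)
    (ψ : Fin L → Fin L → ℝ) (θ θ' : Fin L) (x y : ℝ) :
    tradeObjective w v γ β (symmUpdate ψ θ θ' x) ≤ tradeObjective w v γ β (symmUpdate ψ θ θ' y) ↔
      motifObjective β (-(γ * circleDist θ θ')) v x ≤
        motifObjective β (-(γ * circleDist θ θ')) v y := by
  have hpos : 0 < (#{p : Fin L × Fin L | s(p.1, p.2) = s(θ, θ')} : ℝ) * (w θ * w θ') :=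
    mul_pos (Nat.cast_pos.2 (card_pos.2 ⟨(θ, θ'), mem_filter.2 ⟨mem_univ _, rfl⟩⟩))
      (mul_pos (hw θ) (hw θ'))
  rw [← sub_nonneg, tradeObjective_symmUpdate_sub, mul_nonneg_iff_of_pos_left hpos, sub_nonneg]

theorem stmt_15_general (L : ℕ) (w : Fin L → ℝ)
    (hwpos : ∀ θ, 0 < w θ)
    (v γ : ℝ)
    (β : ℝ)
    (ψs : Fin L → Fin L → ℝ)
    (hmem : ∀ θ θ', ψs θ θ' ∈ Set.Icc (0 : ℝ) 1)
    (hmax : ∀ ψ : Fin L → Fin L → ℝ, (∀ θ θ', ψ θ θ' ∈ Set.Icc (0 : ℝ) 1) →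
      tradeObjective w v γ β ψ ≤ tradeObjective w v γ β ψs)
    (huniq : ∀ ψ : Fin L → Fin L → ℝ, (∀ θ θ', ψ θ θ' ∈ Set.Icc (0 : ℝ) 1) →
      (∀ ψ' : Fin L → Fin L → ℝ, (∀ θ θ', ψ' θ θ' ∈ Set.Icc (0 : ℝ) 1) →
        tradeObjective w v γ β ψ' ≤ tradeObjective w v γ β ψ) → ψ = ψs) :
    (∀ θ θ', ψs θ θ' = ψs θ' θ) ∧
    (∀ θ θ', ψs θ θ' ∈ Set.Ioo (0 : ℝ) 1 ∧
      β * (v * ψs θ θ' - γ * circleDist θ θ') +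
        Real.log ((1 - ψs θ θ') / ψs θ θ') = 0) := by
  have hswap : Function.swap ψs = ψs :=
    huniq _ (fun θ θ' => hmem θ' θ) fun ψ hψ => (tradeObjective_swap w v γ β ψs).symm ▸ hmax ψ hψ
  have hsymm : ∀ θ θ', ψs θ θ' = ψs θ' θ := fun θ θ' => congrFun₂ hswap θ' θ
  refine ⟨hsymm, fun θ θ' => ?_⟩
  have hmotif : IsMaxOn (motifObjective β (-(γ * circleDist θ θ')) v) (Icc 0 1) (ψs θ θ') := by
    intro x hx
    rw [mem_ofPred_eq, ← tradeObjective_symmUpdate_le_iff hwpos, symmUpdate_self (hsymm θ' θ)]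
    exact hmax _ (symmUpdate_mem hmem θ θ' hx)
  exact ⟨hmotif.motifObjective_mem_Ioo (hmem θ θ'),
    by linear_combination hmotif.motifObjective_deriv_eq_zero (hmem θ θ')⟩

/-- **Lemma 3 (first-order conditions in the spatial trade model).** If the trade
objective has a unique maximizer `ψ*` over kernels `ψ : Θ² → [0,1]`, then `ψ*` is
symmetric and, for each pair `(θ,θ')`, `ψ*_{θθ'}` is interior and satisfies the
first-order condition `β(v ψ*_{θθ'} − γ D(θ,θ')) + H'(ψ*_{θθ'}) = 0`, i.e. the FOC of
the two-motif problem with values `a₁ = −γD(θ,θ')` and `a₂ = v`. -/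
theorem stmt_15 (L : ℕ) (hL : 0 < L) (w : Fin L → ℝ)
    (hwpos : ∀ θ, 0 < w θ) (hwsum : ∑ θ, w θ = 1)
    (v γ σ : ℝ) (hv : 0 < v) (hγ : 0 < γ) (hσ : σ ∈ Set.Ioo (0 : ℝ) 1)
    (β : ℝ) (hβ : β = (1 - σ) / σ)
    (ψs : Fin L → Fin L → ℝ)
    (hmem : ∀ θ θ', ψs θ θ' ∈ Set.Icc (0 : ℝ) 1)
    (hmax : ∀ ψ : Fin L → Fin L → ℝ, (∀ θ θ', ψ θ θ' ∈ Set.Icc (0 : ℝ) 1) →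
      tradeObjective w v γ β ψ ≤ tradeObjective w v γ β ψs)
    (huniq : ∀ ψ : Fin L → Fin L → ℝ, (∀ θ θ', ψ θ θ' ∈ Set.Icc (0 : ℝ) 1) →
      (∀ ψ' : Fin L → Fin L → ℝ, (∀ θ θ', ψ' θ θ' ∈ Set.Icc (0 : ℝ) 1) →
        tradeObjective w v γ β ψ' ≤ tradeObjective w v γ β ψ) → ψ = ψs) :
    (∀ θ θ', ψs θ θ' = ψs θ' θ) ∧
    (∀ θ θ', ψs θ θ' ∈ Set.Ioo (0 : ℝ) 1 ∧
      β * (v * ψs θ θ' - γ * circleDist θ θ') +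
        Real.log ((1 - ψs θ θ') / ψs θ θ') = 0) :=
  stmt_15_general L w hwpos v γ β ψs hmem hmax huniq
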